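/- Let F be a finite field, let K(F) be the subgroup of GL_3(F) of invertible upper triangular matrices M with M₁₁ = M₂₂ and M₃₃ = 1, and let Z be the subgroup of upper unitriangular matrices with (1,2)- and (2,3)-entries zero. Then Z is normal in K(F) and (K(F), Z) is a Camina pair. -/

import Mathlib

open Matrix

variable (F : Type*) [Field F]

/-- The inverse of an upper unitriangular `3 × 3` matrix, explicitly. -/
lemma unitriangular_inv_val {F : Type*} [Field F] (A : GL (Fin 3) F)
    (hA1 : ∀ i : Fin 3, (A : Matrix (Fin 3) (Fin 3) F) i i = 1)
    (hA0 : ∀ i j : Fin 3, j < i → (A : Matrix (Fin 3) (Fin 3) F) i j = 0) :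
    ((A⁻¹ : GL (Fin 3) F) : Matrix (Fin 3) (Fin 3) F)
      = !![1, -((A : Matrix (Fin 3) (Fin 3) F) 0 1),
            (A : Matrix (Fin 3) (Fin 3) F) 0 1 * (A : Matrix (Fin 3) (Fin 3) F) 1 2
              - (A : Matrix (Fin 3) (Fin 3) F) 0 2;
          0, 1, -((A : Matrix (Fin 3) (Fin 3) F) 1 2); 0, 0, 1] := by
  have a10 := hA0 1 0 (by decide)
  have a20 := hA0 2 0 (by decide)
  have a21 := hA0 2 1 (by decide)
  apply Units.inv_eq_of_mul_eq_one_right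
  ext i j
  fin_cases i <;> fin_cases j <;>
    simp_all [Units.val_mul, Matrix.mul_apply, Fin.sum_univ_three, Matrix.vecHead,
      Matrix.vecTail] <;> ring_nf

/-- The group `H(F)` of upper unitriangular `3 × 3` matrices over `F`. -/
def Unitriangular : Subgroup (GL (Fin 3) F) where
  carrier := {M | (∀ i : Fin 3, (M : Matrix (Fin 3) (Fin 3) F) i i = 1) ∧
      ∀ i j : Fin 3, j < i → (M : Matrix (Fin 3) (Fin 3) F) i j = 0}
  one_mem' := by
    refine ⟨fun i => by simp, fun i j hij => ?_⟩
    simp [Matrix.one_apply, (ne_of_lt hij).symm]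
  mul_mem' := by
    rintro A B ⟨hA1, hA0⟩ ⟨hB1, hB0⟩
    have a10 := hA0 1 0 (by decide)
    have a20 := hA0 2 0 (by decide)
    have a21 := hA0 2 1 (by decide)
    have b10 := hB0 1 0 (by decide)
    have b20 := hB0 2 0 (by decide)
    have b21 := hB0 2 1 (by decide)
    constructor
    · intro i
      fin_cases i <;> simp_all [Units.val_mul, Matrix.mul_apply, Fin.sum_univ_three]
    · intro i j hij
      fin_cases i <;> fin_cases j <;> first
        | exact absurd hij (by decide)
        | simp_all [Units.val_mul, Matrix.mul_apply, Fin.sum_univ_three]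
  inv_mem' := by
    rintro A ⟨hA1, hA0⟩
    have key := unitriangular_inv_val A hA1 hA0
    constructor
    · intro i; fin_cases i <;> simp [key, Matrix.vecHead, Matrix.vecTail]
    · intro i j hij
      fin_cases i <;> fin_cases j <;> first
        | exact absurd hij (by decide)
        | simp [key, Matrix.vecHead, Matrix.vecTail]

/-- The subgroup `Z` of `H(F)`: unitriangular matrices with `(1,2)`- and `(2,3)`-entries zero. -/
def CenterUnitriangular : Subgroup (GL (Fin 3) F) where
  carrier := {M | M ∈ Unitriangular F ∧ (M : Matrix (Fin 3) (Fin 3) F) 0 1 = 0 ∧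
      (M : Matrix (Fin 3) (Fin 3) F) 1 2 = 0}
  one_mem' := ⟨(Unitriangular F).one_mem, by simp [Matrix.one_apply], by simp [Matrix.one_apply]⟩
  mul_mem' := by
    rintro A B ⟨hA, hA01, hA12⟩ ⟨hB, hB01, hB12⟩
    refine ⟨(Unitriangular F).mul_mem hA hB, ?_, ?_⟩ <;>
      simp_all [Units.val_mul, Matrix.mul_apply, Fin.sum_univ_three, hA.1, hB.1,
        hA.2 1 0 (by decide), hA.2 2 0 (by decide), hA.2 2 1 (by decide),
        hB.2 1 0 (by decide), hB.2 2 0 (by decide), hB.2 2 1 (by decide)]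
  inv_mem' := by
    rintro A ⟨hA, hA01, hA12⟩
    have key := unitriangular_inv_val A hA.1 hA.2
    refine ⟨(Unitriangular F).inv_mem hA, ?_, ?_⟩ <;>
      simp [key, hA01, hA12, Matrix.vecHead, Matrix.vecTail]
lemma diag_ne_zero {F : Type*} [Field F] (A : GL (Fin 3) F)
    (h0 : ∀ i j : Fin 3, j < i → (A : Matrix (Fin 3) (Fin 3) F) i j = 0) (i : Fin 3) :
    (A : Matrix (Fin 3) (Fin 3) F) i i ≠ 0 := by
  have hdet : IsUnit (A : Matrix (Fin 3) (Fin 3) F).det :=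
    (Matrix.isUnit_iff_isUnit_det _).mp ⟨A, rfl⟩
  have hd : (A : Matrix (Fin 3) (Fin 3) F).det
      = (A : Matrix (Fin 3) (Fin 3) F) 0 0 * (A : Matrix (Fin 3) (Fin 3) F) 1 1 *
        (A : Matrix (Fin 3) (Fin 3) F) 2 2 := by
    rw [Matrix.det_fin_three]
    simp [h0 1 0 (by decide), h0 2 0 (by decide), h0 2 1 (by decide)]
  rw [hd] at hdet
  have := hdet.ne_zero
  have h00 : (A : Matrix (Fin 3) (Fin 3) F) 0 0 ≠ 0 := fun h => this (by rw [h]; ring)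
  have h11 : (A : Matrix (Fin 3) (Fin 3) F) 1 1 ≠ 0 := fun h => this (by rw [h]; ring)
  have h22 : (A : Matrix (Fin 3) (Fin 3) F) 2 2 ≠ 0 := fun h => this (by rw [h]; ring)
  fin_cases i
  exacts [h00, h11, h22]

lemma kgroup_inv_val {F : Type*} [Field F] (A : GL (Fin 3) F)
    (hA0 : ∀ i j : Fin 3, j < i → (A : Matrix (Fin 3) (Fin 3) F) i j = 0)
    (hA01 : (A : Matrix (Fin 3) (Fin 3) F) 0 0 = (A : Matrix (Fin 3) (Fin 3) F) 1 1)
    (hA1 : (A : Matrix (Fin 3) (Fin 3) F) 2 2 = 1) :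
    ((A⁻¹ : GL (Fin 3) F) : Matrix (Fin 3) (Fin 3) F)
      = !![((A : Matrix (Fin 3) (Fin 3) F) 0 0)⁻¹,
            -((A : Matrix (Fin 3) (Fin 3) F) 0 1 * ((A : Matrix (Fin 3) (Fin 3) F) 0 0)⁻¹ *
              ((A : Matrix (Fin 3) (Fin 3) F) 0 0)⁻¹),
            ((A : Matrix (Fin 3) (Fin 3) F) 0 1 * (A : Matrix (Fin 3) (Fin 3) F) 1 2 *
              ((A : Matrix (Fin 3) (Fin 3) F) 0 0)⁻¹ - (A : Matrix (Fin 3) (Fin 3) F) 0 2) *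
              ((A : Matrix (Fin 3) (Fin 3) F) 0 0)⁻¹;
          0, ((A : Matrix (Fin 3) (Fin 3) F) 0 0)⁻¹,
            -((A : Matrix (Fin 3) (Fin 3) F) 1 2 * ((A : Matrix (Fin 3) (Fin 3) F) 0 0)⁻¹);
          0, 0, 1] := by
  have a10 := hA0 1 0 (by decide); have a20 := hA0 2 0 (by decide)
  have a21 := hA0 2 1 (by decide)
  have hxne : (A : Matrix (Fin 3) (Fin 3) F) 0 0 ≠ 0 := diag_ne_zero A hA0 0
  apply Units.inv_eq_of_mul_eq_one_right
  ext i j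
  fin_cases i <;> fin_cases j <;>
    simp_all [Units.val_mul, Matrix.mul_apply, Fin.sum_univ_three, Matrix.vecHead,
      Matrix.vecTail] <;>
    field_simp <;> ring_nf

/-- The group `K(F)`: invertible upper triangular `3 × 3` matrices over `F` whose
first two diagonal entries are equal and whose `(3,3)`-entry is `1`. -/
def KGroup : Subgroup (GL (Fin 3) F) where
  carrier := {M | (∀ i j : Fin 3, j < i → (M : Matrix (Fin 3) (Fin 3) F) i j = 0) ∧
      (M : Matrix (Fin 3) (Fin 3) F) 0 0 = (M : Matrix (Fin 3) (Fin 3) F) 1 1 ∧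
      (M : Matrix (Fin 3) (Fin 3) F) 2 2 = 1}
  one_mem' := by
    refine ⟨fun i j hij => ?_, by simp, by simp⟩
    simp [Matrix.one_apply, (ne_of_lt hij).symm]
  mul_mem' := by
    rintro A B ⟨hA0, hA01, hA1⟩ ⟨hB0, hB01, hB1⟩
    have a10 := hA0 1 0 (by decide); have a20 := hA0 2 0 (by decide)
    have a21 := hA0 2 1 (by decide)
    have b10 := hB0 1 0 (by decide); have b20 := hB0 2 0 (by decide)
    have b21 := hB0 2 1 (by decide)
    refine ⟨fun i j hij => ?_, ?_, ?_⟩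
    · fin_cases i <;> fin_cases j <;> first
        | exact absurd hij (by decide)
        | simp_all [Units.val_mul, Matrix.mul_apply, Fin.sum_univ_three]
    · simp_all [Units.val_mul, Matrix.mul_apply, Fin.sum_univ_three]
    · simp_all [Units.val_mul, Matrix.mul_apply, Fin.sum_univ_three]
  inv_mem' := by
    rintro A ⟨hA0, hA01, hA1⟩
    have key := kgroup_inv_val A hA0 hA01 hA1
    refine ⟨fun i j hij => ?_, ?_, ?_⟩
    · fin_cases i <;> fin_cases j <;> first
        | exact absurd hij (by decide)
        | simp [key, Matrix.vecHead, Matrix.vecTail]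
    · simp [key, Matrix.vecHead, Matrix.vecTail]
    · simp [key, Matrix.vecHead, Matrix.vecTail]


/-- `(G, N)` is a Camina pair: `N` is normal in `G` and every element `g ∈ G \\ N`
is conjugate in `G` to every element of the coset `g N`. -/
def IsCaminaPair (G : Type*) [Group G] (N : Subgroup G) : Prop :=
  N.Normal ∧ ∀ g : G, g ∉ N → ∀ n ∈ N, IsConj g (g * n)

/-! An element of `K(F)` has the shape `!![a, b, c; 0, a, d; 0, 0, 1]` and an element of `Z`
the shape `!![1, 0, z; 0, 1, 0; 0, 0, 1]`. Conjugation by such a `g` multiplies `z` by `a`, so `Z`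
is normal. For `g ∉ Z`, the matrix `u = !![1, y, w; 0, 1, v; 0, 0, 1]` satisfies `u g = g n u`
as soon as `v (1 - a) = 0` and `y d + w (1 - a) - b v = a z`; since `(a, b, d) ≠ (1, 0, 0)`,
this linear system has a solution, so `g` and `g n` are conjugate in `K(F)`. -/

section

variable {F}

def unitriangularGL (y v w : F) : GL (Fin 3) F where
  val := !![1, y, w; 0, 1, v; 0, 0, 1]
  inv := !![1, -y, y * v - w; 0, 1, -v; 0, 0, 1]
  val_inv := by simp [one_fin_three]
  inv_val := by
    simp [one_fin_three]
    ring

lemma unitriangularGL_mem_kGroup (y v w : F) : unitriangularGL y v w ∈ KGroup F := by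
  refine ⟨fun i j hij => ?_, ?_, ?_⟩
  · fin_cases i <;> fin_cases j <;> first
      | exact absurd hij (by decide)
      | simp [unitriangularGL]
  all_goals simp [unitriangularGL]

lemma centerUnitriangular_le_kGroup : CenterUnitriangular F ≤ KGroup F := by
  rintro g ⟨⟨hd, h0⟩, -, -⟩
  exact ⟨h0, by rw [hd 0, hd 1], hd 2⟩

lemma mem_centerUnitriangular_iff_of_mem_kGroup {g : GL (Fin 3) F} (hg : g ∈ KGroup F) :
    g ∈ CenterUnitriangular F ↔ g.val 0 0 = 1 ∧ g.val 0 1 = 0 ∧ g.val 1 2 = 0 := by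
  obtain ⟨h0, h01, h22⟩ := hg
  refine ⟨fun ⟨⟨hd, _⟩, hb, hd'⟩ => ⟨hd 0, hb, hd'⟩,
    fun ⟨ha, hb, hd⟩ => ⟨⟨fun i => ?_, h0⟩, hb, hd⟩⟩
  fin_cases i
  exacts [ha, h01 ▸ ha, h22]

lemma unitriangularGL_mem_centerUnitriangular (w : F) :
    unitriangularGL 0 0 w ∈ CenterUnitriangular F :=
  (mem_centerUnitriangular_iff_of_mem_kGroup (unitriangularGL_mem_kGroup 0 0 w)).2
    (by simp [unitriangularGL])

lemma val_eq_of_mem_kGroup {g : GL (Fin 3) F} (hg : g ∈ KGroup F) :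
    g.val = !![g.val 0 0, g.val 0 1, g.val 0 2; 0, g.val 0 0, g.val 1 2; 0, 0, 1] := by
  obtain ⟨h0, h01, h22⟩ := hg
  ext i j
  fin_cases i <;> fin_cases j <;>
    simp [h0 1 0 (by decide), h0 2 0 (by decide), h0 2 1 (by decide), h01, h22]

lemma val_eq_of_mem_centerUnitriangular {n : GL (Fin 3) F} (hn : n ∈ CenterUnitriangular F) :
    n.val = !![1, 0, n.val 0 2; 0, 1, 0; 0, 0, 1] := by
  obtain ⟨⟨h1, h0⟩, h01, h12⟩ := hn
  ext i j
  fin_cases i <;> fin_cases j <;>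
    simp [h0 1 0 (by decide), h0 2 0 (by decide), h0 2 1 (by decide), h1, h01, h12]

lemma unitriangularGL_mul_eq_mul {g n : GL (Fin 3) F} (hg : g ∈ KGroup F)
    (hn : n ∈ CenterUnitriangular F) :
    unitriangularGL 0 0 (g.val 0 0 * n.val 0 2) * g = g * n := by
  ext : 1
  rw [Units.val_mul, Units.val_mul, val_eq_of_mem_kGroup hg,
    val_eq_of_mem_centerUnitriangular hn]
  simp [unitriangularGL]
  ring

lemma conj_mem_centerUnitriangular {g n : GL (Fin 3) F} (hg : g ∈ KGroup F)
    (hn : n ∈ CenterUnitriangular F) : g * n * g⁻¹ ∈ CenterUnitriangular F := by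
  rw [← unitriangularGL_mul_eq_mul hg hn, mul_inv_cancel_right]
  exact unitriangularGL_mem_centerUnitriangular _

lemma semiconjBy_unitriangularGL {g n : GL (Fin 3) F} (hg : g ∈ KGroup F)
    (hn : n ∈ CenterUnitriangular F) {y v w : F} (hv : v * (1 - g.val 0 0) = 0)
    (hw : y * g.val 1 2 + w * (1 - g.val 0 0) - g.val 0 1 * v = g.val 0 0 * n.val 0 2) :
    SemiconjBy (unitriangularGL y v w) g (g * n) := by
  refine Units.ext ?_
  rw [Units.val_mul, Units.val_mul, Units.val_mul, val_eq_of_mem_kGroup hg,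
    val_eq_of_mem_centerUnitriangular hn]
  simp only [unitriangularGL, mul_fin_three, EmbeddingLike.apply_eq_iff_eq, vecCons_inj, and_true]
  refine ⟨⟨?_, ?_, ?_⟩, ⟨?_, ?_, ?_⟩, ?_, ?_, ?_⟩ <;>
    first | linear_combination hw | linear_combination hv | ring

lemma exists_conjugator_entries {a b d : F} (h : a ≠ 1 ∨ b ≠ 0 ∨ d ≠ 0) (z : F) :
    ∃ y v w : F, v * (1 - a) = 0 ∧ y * d + w * (1 - a) - b * v = a * z := by
  by_cases ha : a = 1
  · subst ha
    by_cases hb : b = 0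
    · have hd : d ≠ 0 := by simpa [hb] using h
      exact ⟨z / d, 0, 0, by ring, by field_simp; ring⟩
    · exact ⟨0, -(z / b), 0, by ring, by field_simp; ring⟩
  · have ha' : 1 - a ≠ 0 := sub_ne_zero.2 (Ne.symm ha)
    exact ⟨0, 0, a * z / (1 - a), by ring, by field_simp; ring⟩

lemma exists_semiconjBy_of_not_mem {g n : GL (Fin 3) F} (hg : g ∈ KGroup F)
    (hgZ : g ∉ CenterUnitriangular F) (hn : n ∈ CenterUnitriangular F) :
    ∃ u ∈ KGroup F, SemiconjBy u g (g * n) := by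
  rw [mem_centerUnitriangular_iff_of_mem_kGroup hg, not_and_or, not_and_or] at hgZ
  obtain ⟨y, v, w, hv, hw⟩ := exists_conjugator_entries hgZ (n.val 0 2)
  exact ⟨_, unitriangularGL_mem_kGroup y v w, semiconjBy_unitriangularGL hg hn hv hw⟩

end

theorem kgroup_caminaPair :
    CenterUnitriangular F ≤ KGroup F ∧
      IsCaminaPair ↥(KGroup F) ((CenterUnitriangular F).subgroupOf (KGroup F)) := by
  refine ⟨centerUnitriangular_le_kGroup, ?_, ?_⟩
  · exact (Subgroup.normal_subgroupOf_iff centerUnitriangular_le_kGroup).2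
      fun n g hn hg => conj_mem_centerUnitriangular hg hn
  · intro g hg n hn
    obtain ⟨u, hu, hsc⟩ := exists_semiconjBy_of_not_mem g.2
      (fun h => hg (Subgroup.mem_subgroupOf.2 h)) (Subgroup.mem_subgroupOf.1 hn)
    exact ⟨toUnits ⟨u, hu⟩, Subtype.ext hsc⟩
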